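/- Fix integers a ≥ 1 and n ≥ 1 and let M = an + 2. For a (1,a)-Dyck path μ of size n (a lattice path from (0,0) to (an,n) with up and right steps, weakly below (UD^a)^n), a peak of μ at (i,j) is an up step of μ ending at the point (i,j) that is immediately followed by a right step; define F_{(1,a)}(x,y,p,q;n) := Σ_μ ∏_{(i,j) ∈ Peak(μ)} x·y^{r−l}·p^{l}·q^{r}, where l = an − i and r = a(n+1−j)+1. For an (a,1)-Dyck path ν of size n (a lattice path from (0,0) to (n,an) weakly below (U^aD)^n), with peaks defined the same way, define F_{(a,1)}(x,y,p,q;n) := Σ_ν ∏_{(i,j) ∈ Peak(ν)} x·y^{r'−l'}·p^{l'}·q^{r'}, where l' = a(n−1−i)+1 and r' = an+2−j. Then, as an identity of Laurent polynomials in p and q with polynomial coefficients in x and y, F_{(1,a)}(x,y,p,q;n) = F_{(a,1)}(p^{M}·q^{M}·x, y, q^{−1}, p^{−1}; n). -/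
import Mathlib


attribute [local instance] Classical.propDecidable

/-- The field `ℚ(x,y,p,q)` of rational functions in four variables over `ℚ`. -/
abbrev K4 : Type := FractionRing (MvPolynomial (Fin 4) ℚ)

/-- The variable `x`. -/
noncomputable def xv : K4 := algebraMap (MvPolynomial (Fin 4) ℚ) K4 (MvPolynomial.X 0)

/-- The variable `y`. -/
noncomputable def yv : K4 := algebraMap (MvPolynomial (Fin 4) ℚ) K4 (MvPolynomial.X 1)

/-- The variable `p`. -/
noncomputable def pv : K4 := algebraMap (MvPolynomial (Fin 4) ℚ) K4 (MvPolynomial.X 2)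

/-- The variable `q`. -/
noncomputable def qv : K4 := algebraMap (MvPolynomial (Fin 4) ℚ) K4 (MvPolynomial.X 3)

/-- Extension of a finite sequence by a default value. -/
def seqExt (n N : ℕ) (dflt : ℕ) (b : Fin n → Fin N) (i : ℕ) : ℕ :=
  if h : i < n then (b ⟨i, h⟩ : ℕ) else dflt

/-- `F_{(1,a)}(x,y,p,q;n)`: a `(1,a)`-Dyck path of size `n` is encoded by the weakly
increasing sequence `b` where `b j` (0-indexed) is the number of right steps preceding
the `(j+1)`-th up step, with `a·j ≤ b j ≤ a·n`.  The `(j+1)`-th up step ends at the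
peak `(i, j+1) = (b j, j+1)` iff it is immediately followed by a right step, i.e. iff
`b j < b (j+1)` (with `b n := a·n`); such a peak contributes the factor
`x·y^{r-l}·p^l·q^r` with `l = a·n - b j` and `r = a·(n-j) + 1 = a(n+1-(j+1)) + 1`. -/
noncomputable def F1 (a n : ℕ) (x y p q : K4) : K4 :=
  ∑ b ∈ Finset.univ.filter (fun b : Fin n → Fin (a * n + 1) =>
      (∀ i j : Fin n, i ≤ j → b i ≤ b j) ∧ ∀ i : Fin n, a * (i : ℕ) ≤ (b i : ℕ)),
    ∏ j ∈ Finset.range n,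
      if seqExt n (a * n + 1) (a * n) b j < seqExt n (a * n + 1) (a * n) b (j + 1) then
        x * y ^ ((a * (n - j) + 1) - (a * n - seqExt n (a * n + 1) (a * n) b j)) *
          p ^ (a * n - seqExt n (a * n + 1) (a * n) b j) * q ^ (a * (n - j) + 1)
      else 1

/-- `F_{(a,1)}(x,y,p,q;n)`: an `(a,1)`-Dyck path of size `n` is encoded by the weakly
increasing sequence `c` where `c j` (0-indexed) is the number of up steps preceding the
`(j+1)`-th right step, with `c j ≤ a·(j+1)`.  The path has a peak just before the
`(j+1)`-th right step iff `c (j-1) < c j` (with `c (-1) := 0`); the peak has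
coordinates `(i, j') = (j, c j)` and contributes the factor `x·y^{r'-l'}·p^{l'}·q^{r'}`
with `l' = a·(n-1-j) + 1 = a(n-1-i)+1` and `r' = a·n + 2 - c j`. -/
noncomputable def F2 (a n : ℕ) (x y p q : K4) : K4 :=
  ∑ c ∈ Finset.univ.filter (fun c : Fin n → Fin (a * n + 1) =>
      (∀ i j : Fin n, i ≤ j → c i ≤ c j) ∧ ∀ i : Fin n, (c i : ℕ) ≤ a * ((i : ℕ) + 1)),
    ∏ j ∈ Finset.range n,
      if (if j = 0 then 0 else seqExt n (a * n + 1) 0 c (j - 1)) <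
          seqExt n (a * n + 1) 0 c j then
        x * y ^ ((a * n + 2 - seqExt n (a * n + 1) 0 c j) - (a * (n - 1 - j) + 1)) *
          p ^ (a * (n - 1 - j) + 1) * q ^ (a * n + 2 - seqExt n (a * n + 1) 0 c j)
      else 1

/-- Auxiliary: the reversal-complement map on path encodings. -/
def revMap (a n : ℕ) (b : Fin n → Fin (a * n + 1)) : Fin n → Fin (a * n + 1) :=
  fun j => ⟨a * n - (b ⟨n - 1 - (j : ℕ), by have := j.isLt; omega⟩ : ℕ), by omega⟩

lemma seqExt_revMap (a n : ℕ) (b : Fin n → Fin (a * n + 1)) (j : ℕ) (hj : j < n) :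
    seqExt n (a * n + 1) 0 (revMap a n b) j
      = a * n - seqExt n (a * n + 1) (a * n) b (n - 1 - j) := by
  have h2 : n - 1 - j < n := by omega
  simp only [seqExt, dif_pos hj, dif_pos h2, revMap]

lemma seqExt_le_an (a n : ℕ) (b : Fin n → Fin (a * n + 1)) (i : ℕ) :
    seqExt n (a * n + 1) (a * n) b i ≤ a * n := by
  unfold seqExt; split
  · next h => exact Nat.lt_succ_iff.mp (b ⟨i, h⟩).isLt
  · exact le_rfl

lemma key_factor (x y p q : K4) (hp : p ≠ 0) (hq : q ≠ 0) (M l' r' e : ℕ)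
    (hl' : l' ≤ M) (hr' : r' ≤ M) :
    x * y ^ e * p ^ (M - r') * q ^ (M - l') =
      (p ^ M * q ^ M * x) * y ^ e * q⁻¹ ^ l' * p⁻¹ ^ r' := by
  have h1 : p ^ (M - r') * p ^ r' = p ^ M := by rw [← pow_add, Nat.sub_add_cancel hr']
  have h2 : q ^ (M - l') * q ^ l' = q ^ M := by rw [← pow_add, Nat.sub_add_cancel hl']
  rw [inv_pow, inv_pow]
  field_simp
  linear_combination x * y ^ e * q ^ (M - l') * q ^ l' * h1 + x * y ^ e * p ^ M * h2

lemma key_factor' (x y p q : K4) (hp : p ≠ 0) (hq : q ≠ 0) (aa nn jj B : ℕ)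
    (hj : jj < nn) (hge : aa * jj ≤ B) (hle : B ≤ aa * nn)
    (hs : aa * (nn - jj) + aa * jj = aa * nn) :
    x * y ^ ((aa * (nn - jj) + 1) - (aa * nn - B)) * p ^ (aa * nn - B) *
        q ^ (aa * (nn - jj) + 1) =
      (p ^ (aa * nn + 2) * q ^ (aa * nn + 2) * x) *
          y ^ ((aa * nn + 2 - (aa * nn - B)) - (aa * jj + 1)) *
          q⁻¹ ^ (aa * jj + 1) * p⁻¹ ^ (aa * nn + 2 - (aa * nn - B)) := by
  have h := key_factor x y p q hp hq (aa * nn + 2) (aa * jj + 1) (B + 2)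
    (B + 1 - aa * jj) (by omega) (by omega)
  rw [show aa * nn + 2 - (aa * nn - B) = B + 2 from by omega,
    show (B + 2) - (aa * jj + 1) = B + 1 - aa * jj from by omega,
    show (aa * (nn - jj) + 1) - (aa * nn - B) = B + 1 - aa * jj from by omega,
    show aa * nn - B = aa * nn + 2 - (B + 2) from by omega,
    show aa * (nn - jj) + 1 = aa * nn + 2 - (aa * jj + 1) from by omega]
  exact h

/-- with `M = a·n + 2`, the duality
`F_{(1,a)}(x,y,p,q;n) = F_{(a,1)}(p^M·q^M·x, y, q⁻¹, p⁻¹; n)` holds as an identity of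
rational functions in the independent variables `x, y, p, q`. -/
theorem stmt_15 (a n : ℕ) (ha : 1 ≤ a) (hn : 1 ≤ n) :
    F1 a n xv yv pv qv =
      F2 a n (pv ^ (a * n + 2) * qv ^ (a * n + 2) * xv) yv qv⁻¹ pv⁻¹ := by
  have hinj := IsFractionRing.injective (MvPolynomial (Fin 4) ℚ) K4
  have hp : pv ≠ 0 := by
    simp only [pv, map_ne_zero_iff _ hinj]; exact MvPolynomial.X_ne_zero 2
  have hq : qv ≠ 0 := by
    simp only [qv, map_ne_zero_iff _ hinj]; exact MvPolynomial.X_ne_zero 3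
  unfold F1 F2
  refine Finset.sum_nbij' (revMap a n) (revMap a n) ?_ ?_ ?_ ?_ ?_
  · -- membership: F1 set → F2 set
    intro b hb
    simp only [Finset.mem_filter, Finset.mem_univ, true_and] at hb ⊢
    obtain ⟨hmono, hlb⟩ := hb
    constructor
    · intro i j hij
      have hij' : (i : ℕ) ≤ (j : ℕ) := hij
      have hi := i.isLt; have hj := j.isLt
      have h1 : (⟨n - 1 - (j : ℕ), by omega⟩ : Fin n) ≤ ⟨n - 1 - (i : ℕ), by omega⟩ := by
        simp only [Fin.mk_le_mk]; omega
      have h2 := hmono _ _ h1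
      simp only [Fin.le_def] at h2 ⊢
      simp only [revMap]
      omega
    · intro i
      have hi := i.isLt
      have key : a * (n - 1 - (i : ℕ)) + a * ((i : ℕ) + 1) = a * n := by
        rw [← Nat.mul_add]; congr 1; omega
      have h1 := hlb ⟨n - 1 - (i : ℕ), by omega⟩
      have h2 := (b ⟨n - 1 - (i : ℕ), by omega⟩).isLt
      simp only at h1
      simp only [revMap]
      omega
  · -- membership: F2 set → F1 set
    intro c hc
    simp only [Finset.mem_filter, Finset.mem_univ, true_and] at hc ⊢
    obtain ⟨hmono, hub⟩ := hc
    constructor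
    · intro i j hij
      have hij' : (i : ℕ) ≤ (j : ℕ) := hij
      have hi := i.isLt; have hj := j.isLt
      have h1 : (⟨n - 1 - (j : ℕ), by omega⟩ : Fin n) ≤ ⟨n - 1 - (i : ℕ), by omega⟩ := by
        simp only [Fin.mk_le_mk]; omega
      have h2 := hmono _ _ h1
      simp only [Fin.le_def] at h2 ⊢
      simp only [revMap]
      omega
    · intro i
      have hi := i.isLt
      have key : a * ((n - 1 - (i : ℕ)) + 1) + a * (i : ℕ) = a * n := by
        rw [← Nat.mul_add]; congr 1; omega
      have h1 := hub ⟨n - 1 - (i : ℕ), by omega⟩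
      simp only at h1
      simp only [revMap]
      omega
  · -- left inverse
    intro b hb
    funext j
    have hj := j.isLt
    apply Fin.ext
    simp only [revMap]
    have hidx : (⟨n - 1 - (n - 1 - (j : ℕ)), by omega⟩ : Fin n) = j := by
      apply Fin.ext; simp only; omega
    rw [hidx]
    have := (b j).isLt
    omega
  · -- right inverse
    intro c hc
    funext j
    have hj := j.isLt
    apply Fin.ext
    simp only [revMap]
    have hidx : (⟨n - 1 - (n - 1 - (j : ℕ)), by omega⟩ : Fin n) = j := by
      apply Fin.ext; simp only; omega
    rw [hidx]
    have := (c j).isLt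
    omega
  · -- the products agree
    intro b hb
    simp only [Finset.mem_filter, Finset.mem_univ, true_and] at hb
    obtain ⟨hmono, hlb⟩ := hb
    conv_rhs => rw [← Finset.prod_range_reflect]
    refine Finset.prod_congr rfl ?_
    intro j hj
    rw [Finset.mem_range] at hj
    set B0 := seqExt n (a * n + 1) (a * n) b j with hB0
    set B1 := seqExt n (a * n + 1) (a * n) b (j + 1) with hB1
    have hB0le : B0 ≤ a * n := seqExt_le_an a n b j
    have hB1le : B1 ≤ a * n := seqExt_le_an a n b (j + 1)
    have hB0ge : a * j ≤ B0 := by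
      rw [hB0]; unfold seqExt; rw [dif_pos hj]; exact hlb ⟨j, hj⟩
    have hs : a * (n - j) + a * j = a * n := by rw [← Nat.mul_add]; congr 1; omega
    have hidx1 : n - 1 - (n - 1 - j) = j := by omega
    have e1 : seqExt n (a * n + 1) 0 (revMap a n b) (n - 1 - j) = a * n - B0 := by
      rw [seqExt_revMap a n b _ (by omega), hidx1]
    by_cases hcase : j + 1 = n
    · -- last index: n - 1 - j = 0
      have hB1v : B1 = a * n := by rw [hB1]; unfold seqExt; rw [dif_neg (by omega)]
      rw [show n - 1 - j = 0 from by omega] at e1 ⊢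
      rw [if_pos rfl, e1, show n - 1 - 0 = j from by omega]
      exact if_congr (by omega)
        (key_factor' xv yv pv qv hp hq a n j B0 hj hB0ge hB0le hs) rfl
    · -- n - 1 - j ≥ 1
      have hne : ¬ (n - 1 - j = 0) := by omega
      have e2 : seqExt n (a * n + 1) 0 (revMap a n b) (n - 1 - j - 1) = a * n - B1 := by
        rw [seqExt_revMap a n b _ (by omega), show n - 1 - (n - 1 - j - 1) = j + 1 from by omega]
      rw [if_neg hne, e1, e2, hidx1]
      exact if_congr (by omega)
        (key_factor' xv yv pv qv hp hq a n j B0 hj hB0ge hB0le hs) rfl
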